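/- arXiv:2107.09956 — 4 statements merged into one kernel-verified Lean document; each statement's English description precedes it below -/
import Mathlib

section
/- Let 𝔊₂ be the 7-dimensional real Lie algebra with basis (X₁,X₂,X₃,X₄,X₅,X,Y) and nonzero brackets [X₁,X₂]=X₄, [X₁,X₃]=X₅, [X,X₁]=X₁, [X,X₄]=X₄, [X,X₅]=X₅, [Y,X₃]=X₃, [Y,X₅]=X₅. For F ∈ 𝔊₂* with coordinates (α₁,α₂,α₃,α₄,α₅,α,β) in the dual basis, let B_F be the skew-symmetric bilinear form on 𝔊₂ defined by B_F(A,B) = ⟨F,[A,B]⟩. Then the rank of B_F equals 6 if and only if α₄ ≠ 0 and (α₃ ≠ 0 or α₅ ≠ 0); in particular the maximal possible rank of B_F over all F is 6. -/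
noncomputable section

/-- Half of the structure constants of the Lie algebra 𝔊₂: `g2half i j` is the
coordinate vector of `[Xᵢ, Xⱼ]` for the ordered pairs `(i,j)` listed in the paper
(indices `0,…,4` are `X₁,…,X₅`, index `5` is `X`, index `6` is `Y`). -/
def g2half (i j : Fin 7) : Fin 7 → ℝ :=
  if i = 0 ∧ j = 1 then Pi.single 3 1      -- [X₁,X₂] = X₄
  else if i = 0 ∧ j = 2 then Pi.single 4 1 -- [X₁,X₃] = X₅
  else if i = 5 ∧ j = 0 then Pi.single 0 1 -- [X,X₁] = X₁
  else if i = 5 ∧ j = 3 then Pi.single 3 1 -- [X,X₄] = X₄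
  else if i = 5 ∧ j = 4 then Pi.single 4 1 -- [X,X₅] = X₅
  else if i = 6 ∧ j = 2 then Pi.single 2 1 -- [Y,X₃] = X₃
  else if i = 6 ∧ j = 4 then Pi.single 4 1 -- [Y,X₅] = X₅
  else 0

/-- The bracket `[Xᵢ, Xⱼ]` (in coordinates) of basis vectors of 𝔊₂,
obtained by antisymmetrizing `g2half`. -/
def g2br (i j : Fin 7) : Fin 7 → ℝ := g2half i j - g2half j i

/-- The Gram matrix of the bilinear form `B_F(A,B) = ⟨F,[A,B]⟩` in the given basis,
where `α` is the coordinate vector of `F` in the dual basis. -/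
def gramG2 (α : Fin 7 → ℝ) : Matrix (Fin 7) (Fin 7) ℝ :=
  Matrix.of fun i j => ∑ k, α k * g2br i j k


/-! `B_F` is skew-symmetric on an odd-dimensional space, so its Gram matrix is singular and
has rank at most 6. If `α₄ = 0` the vectors `X₂, X₄` lie in the radical of `B_F`, and if
`α₃ = α₅ = 0` so do `X₃, X₅`; in either case the rank is at most 5. Otherwise solving the
linear system `B_F(·, A) = 0` shows that the radical is the line through
`-α₅² X₂ + α₄α₅ X₃ + α₃α₅ X₄ - α₃α₄ X₅`, so the rank is exactly 6. -/

open Matrix Module LinearMap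

namespace Matrix

variable {m n K : Type*} [Fintype n] [Field K]

theorem rank_add_finrank_ker_mulVecLin (A : Matrix n n K) :
    A.rank + finrank K (ker A.mulVecLin) = Fintype.card n := by
  rw [rank, finrank_range_add_finrank_ker, finrank_fintype_fun_eq_card]

theorem det_eq_zero_of_transpose_eq_neg [DecidableEq n] {R : Type*} [CommRing R]
    [IsAddTorsionFree R] {A : Matrix n n R} (hA : Aᵀ = -A) (hn : Odd (Fintype.card n)) :
    A.det = 0 :=
  self_eq_neg.mp <| calc
    A.det = Aᵀ.det := (det_transpose A).symm
    _ = -A.det := by rw [hA, det_neg, hn.neg_one_pow, neg_one_mul]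

theorem rank_lt_card_of_det_eq_zero [DecidableEq n] {A : Matrix n n K} (hA : A.det = 0) :
    A.rank < Fintype.card n := by
  obtain ⟨v, hv, hAv⟩ := exists_mulVec_eq_zero_iff.mpr hA
  have hker : 0 < finrank K (ker A.mulVecLin) :=
    finrank_pos_iff_exists_ne_zero.mpr ⟨⟨v, hAv⟩, fun h => hv (congrArg Subtype.val h)⟩
  have := A.rank_add_finrank_ker_mulVecLin
  omega

theorem card_sub_one_le_rank_of_ker_le_span {A : Matrix n n K} {w : n → K}
    (h : ker A.mulVecLin ≤ K ∙ w) : Fintype.card n - 1 ≤ A.rank := by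
  have hker : finrank K (ker A.mulVecLin) ≤ 1 :=
    (Submodule.finrank_mono h).trans <| by simpa using finrank_span_le_card ({w} : Set (n → K))
  have := A.rank_add_finrank_ker_mulVecLin
  omega

theorem row_eq_zero_of_forall_mulVec_apply_eq_zero [DecidableEq n] {A : Matrix m n K} {i : m}
    (h : ∀ v, (A *ᵥ v) i = 0) : A i = 0 := by
  ext j
  simpa [mulVec_single_one] using h (Pi.single j 1)

theorem rank_le_card_sub_two_of_row_eq_zero [DecidableEq n] {A : Matrix n n K} {i j : n}
    (hij : i ≠ j) (hi : A i = 0) (hj : A j = 0) : A.rank ≤ Fintype.card n - 2 := by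
  calc A.rank ≤ (Finset.univ \ {i, j}).card := by
        refine rank_le_card_of_support_subset A _ fun k (hk : A k ≠ 0) => ?_
        simp only [Finset.coe_sdiff, Finset.coe_univ, Finset.coe_insert, Finset.coe_singleton,
          Set.mem_sdiff, Set.mem_univ, Set.mem_insert_iff, Set.mem_singleton_iff, true_and]
        rintro (rfl | rfl) <;> contradiction
    _ = Fintype.card n - 2 := by rw [Finset.card_univ_sdiff, Finset.card_pair hij]

end Matrix

lemma g2br_swap (i j : Fin 7) : g2br j i = -g2br i j := by
  rw [g2br, g2br, neg_sub]

lemma gramG2_transpose (α : Fin 7 → ℝ) : (gramG2 α)ᵀ = -gramG2 α := by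
  ext i j
  change ∑ k, α k * g2br j i k = -∑ k, α k * g2br i j k
  simp only [g2br_swap i j, Pi.neg_apply, mul_neg, Finset.sum_neg_distrib]

lemma gramG2_mulVec (α v : Fin 7 → ℝ) :
    gramG2 α *ᵥ v =
      ![α 3 * v 1 + α 4 * v 2 - α 0 * v 5,
        -(α 3 * v 0),
        -(α 4 * v 0) - α 2 * v 6,
        -(α 3 * v 5),
        -(α 4 * v 5) - α 4 * v 6,
        α 0 * v 0 + α 3 * v 3 + α 4 * v 4,
        α 2 * v 2 + α 4 * v 4] := by
  ext i
  fin_cases i <;>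
    simp [gramG2, g2br, g2half, Matrix.mulVec, dotProduct, Fin.sum_univ_seven] <;> ring

lemma rank_gramG2_le_six (α : Fin 7 → ℝ) : (gramG2 α).rank ≤ 6 :=
  Nat.le_of_lt_succ <| by
    simpa using rank_lt_card_of_det_eq_zero <|
      det_eq_zero_of_transpose_eq_neg (gramG2_transpose α) (by decide)

lemma rank_gramG2_le_five {α : Fin 7 → ℝ} (h : ¬(α 3 ≠ 0 ∧ (α 2 ≠ 0 ∨ α 4 ≠ 0))) :
    (gramG2 α).rank ≤ 5 := by
  by_cases h3 : α 3 = 0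
  · simpa using rank_le_card_sub_two_of_row_eq_zero (show (1 : Fin 7) ≠ 3 by decide)
      (row_eq_zero_of_forall_mulVec_apply_eq_zero fun v => by simp [gramG2_mulVec, h3])
      (row_eq_zero_of_forall_mulVec_apply_eq_zero fun v => by simp [gramG2_mulVec, h3])
  · obtain ⟨h2, h4⟩ : α 2 = 0 ∧ α 4 = 0 := by tauto
    simpa using rank_le_card_sub_two_of_row_eq_zero (show (2 : Fin 7) ≠ 4 by decide)
      (row_eq_zero_of_forall_mulVec_apply_eq_zero fun v => by simp [gramG2_mulVec, h2, h4])
      (row_eq_zero_of_forall_mulVec_apply_eq_zero fun v => by simp [gramG2_mulVec, h4])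

lemma ker_gramG2_le_span {α : Fin 7 → ℝ} (h3 : α 3 ≠ 0) (h24 : α 2 ≠ 0 ∨ α 4 ≠ 0) :
    ker (gramG2 α).mulVecLin ≤
      ℝ ∙ ![0, -α 4 ^ 2, α 3 * α 4, α 2 * α 4, -(α 2 * α 3), 0, 0] := by
  intro x (hx : gramG2 α *ᵥ x = 0)
  rw [gramG2_mulVec] at hx
  have E0 : α 3 * x 1 + α 4 * x 2 - α 0 * x 5 = 0 := congrFun hx 0
  have E1 : -(α 3 * x 0) = 0 := congrFun hx 1
  have E2 : -(α 4 * x 0) - α 2 * x 6 = 0 := congrFun hx 2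
  have E3 : -(α 3 * x 5) = 0 := congrFun hx 3
  have E4 : -(α 4 * x 5) - α 4 * x 6 = 0 := congrFun hx 4
  have E5 : α 0 * x 0 + α 3 * x 3 + α 4 * x 4 = 0 := congrFun hx 5
  have E6 : α 2 * x 2 + α 4 * x 4 = 0 := congrFun hx 6
  have hx0 : x 0 = 0 := by simpa [h3] using E1
  have hx5 : x 5 = 0 := by simpa [h3] using E3
  have hx6 : x 6 = 0 := by
    rcases h24 with h | h
    · simpa [hx0, h] using E2
    · simpa [hx5, h] using E4
  have hD : α 2 ^ 2 + α 4 ^ 2 ≠ 0 := by rcases h24 with h | h <;> positivity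
  -- `E6` says `(x 2, x 4)` is orthogonal to `(α 2, α 4)`; projecting onto `(α 4, -α 2)`
  -- gives a coefficient that works whichever of `α 2`, `α 4` is nonzero.
  refine Submodule.mem_span_singleton.mpr
    ⟨(α 4 * x 2 - α 2 * x 4) / (α 3 * (α 2 ^ 2 + α 4 ^ 2)), ?_⟩
  ext i
  fin_cases i <;> simp [hx0, hx5, hx6] <;> field_simp
  · linear_combination α 2 * α 4 * E6 - (α 2 ^ 2 + α 4 ^ 2) * (E0 + α 0 * hx5)
  · linear_combination -α 2 * E6
  · linear_combination α 4 ^ 2 * E6 - (α 2 ^ 2 + α 4 ^ 2) * (E5 - α 0 * hx0)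
  · linear_combination -α 4 * E6

lemma six_le_rank_gramG2 {α : Fin 7 → ℝ} (h3 : α 3 ≠ 0) (h24 : α 2 ≠ 0 ∨ α 4 ≠ 0) :
    6 ≤ (gramG2 α).rank := by
  simpa using card_sub_one_le_rank_of_ker_le_span (ker_gramG2_le_span h3 h24)

/-- For `F ∈ 𝔊₂*` with coordinates `(α₁,…,α₅,α,β)`, the rank of `B_F` is `6`
iff `α₄ ≠ 0` and (`α₃ ≠ 0` or `α₅ ≠ 0`); in particular the maximal rank is `6`. -/
theorem rank_BF_G2 :
    (∀ α : Fin 7 → ℝ, (gramG2 α).rank ≤ 6) ∧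
    (∀ α : Fin 7 → ℝ,
      (gramG2 α).rank = 6 ↔ (α 3 ≠ 0 ∧ (α 2 ≠ 0 ∨ α 4 ≠ 0))) := by
  refine ⟨rank_gramG2_le_six, fun α => ⟨fun h6 => ?_, fun ⟨h3, h24⟩ => ?_⟩⟩
  · by_contra h
    have := rank_gramG2_le_five h
    omega
  · exact le_antisymm (rank_gramG2_le_six α) (six_le_rank_gramG2 h3 h24)

end
end

section
/- Let 𝔊₂ be the 7-dimensional real Lie algebra with basis (X₁,X₂,X₃,X₄,X₅,X,Y) and nonzero brackets [X₁,X₂]=X₄, [X₁,X₃]=X₅, [X,X₁]=X₁, [X,X₄]=X₄, [X,X₅]=X₅, [Y,X₃]=X₃, [Y,X₅]=X₅. For every U = x₁X₁+x₂X₂+x₃X₃+x₄X₄+x₅X₅+xX+yY ∈ 𝔊₂ (x₁,...,x₅,x,y ∈ ℝ), the characteristic polynomial of the adjoint endomorphism ad_U : T ↦ [U,T] equals T³·(T−x)²·(T−y)·(T−x−y). In particular, all complex eigenvalues of ad_U are real for every U ∈ 𝔊₂. -/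
noncomputable section

/-- The matrix (in the given basis) of the adjoint endomorphism `ad_U : T ↦ [U,T]`
of 𝔊₂, where `u` is the coordinate vector of `U`, so `U = ∑ uᵢ Xᵢ + u₅ X + u₆ Y`. -/
def adG2 (u : Fin 7 → ℝ) : Matrix (Fin 7) (Fin 7) ℝ :=
  Matrix.of fun k j => ∑ i, u i * g2br i j k

/-! The flag of ideals `⟨X₅⟩ ⊂ ⟨X₅,X₄⟩ ⊂ ⟨X₅,X₄,X₃⟩ ⊂ ⋯` of 𝔊₂ is `ad`-invariant, so in a suitably
reordered basis every `ad_U` is triangular. Its characteristic polynomial is then the product of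
the `T − dᵢ` over its diagonal entries `x, 0, y, x, x + y, 0, 0`; as these are real, so are all
complex eigenvalues of `ad_U`. -/

namespace Matrix

open Polynomial

variable {n R : Type*} [Fintype n] [DecidableEq n] [CommRing R]

theorem BlockTriangular.charpoly_eq_prod_of_injective {α : Type*} [LinearOrder α]
    {M : Matrix n n R} {b : n → α} (h : M.BlockTriangular b) (hb : Function.Injective b) :
    M.charpoly = ∏ i, (X - C (M i i)) :=
  letI : LinearOrder n := LinearOrder.lift' b hb
  charpoly_of_isUpperTriangular M h

theorem exists_eq_of_hasEigenvalue_toLin'_map {S : Type*} [CommRing S] [IsDomain S]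
    {A : Matrix n n R} {d : n → R} (hA : A.charpoly = ∏ i, (X - C (d i))) (f : R →+* S)
    {z : S} (hz : Module.End.HasEigenvalue (toLin' (A.map f)) z) : ∃ i, z = f (d i) := by
  rw [Module.End.hasEigenvalue_iff_isRoot_charpoly, charpoly_toLin',
    charpoly_map, hA] at hz
  simpa [Polynomial.map_prod, eval_prod, Finset.prod_eq_zero_iff, sub_eq_zero] using hz

end Matrix

theorem adG2_eq (u : Fin 7 → ℝ) :
    adG2 u = !![u 5, 0, 0, 0, 0, -u 0, 0;
                0, 0, 0, 0, 0, 0, 0;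
                0, 0, u 6, 0, 0, 0, -u 2;
                -u 1, u 0, 0, u 5, 0, -u 3, 0;
                -u 2, 0, u 0, 0, u 5 + u 6, -u 4, -u 4;
                0, 0, 0, 0, 0, 0, 0;
                0, 0, 0, 0, 0, 0, 0] := by
  ext k j
  fin_cases k <;> fin_cases j <;> simp [adG2, g2br, g2half, Fin.sum_univ_seven]

/-- The weight of a basis vector is its position in the flag of ideals
`⟨X₅⟩ ⊂ ⟨X₅,X₄⟩ ⊂ ⟨X₅,X₄,X₃⟩ ⊂ ⟨X₅,X₄,X₃,X₁⟩ ⊂ ⟨…,Y⟩ ⊂ ⟨…,X⟩ ⊂ 𝔊₂`. -/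
theorem adG2_blockTriangular (u : Fin 7 → ℝ) :
    (adG2 u).BlockTriangular ![3, 6, 2, 1, 0, 5, 4] := by
  intro k j hkj
  rw [adG2_eq]
  fin_cases k <;> fin_cases j <;> first | rfl | exact absurd hkj (by decide)

open Polynomial in
/-- For every `U = x₁X₁+⋯+x₅X₅+xX+yY ∈ 𝔊₂`, the characteristic polynomial of `ad_U`
is `T³(T−x)²(T−y)(T−x−y)`; in particular all complex eigenvalues of `ad_U` are real. -/
theorem charpoly_ad_G2 (u : Fin 7 → ℝ) :
    (adG2 u).charpoly =
      X ^ 3 * (X - C (u 5)) ^ 2 * (X - C (u 6)) * (X - C (u 5 + u 6)) ∧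
    ∀ z : ℂ, Module.End.HasEigenvalue
        (Matrix.toLin' ((adG2 u).map (fun r : ℝ => (r : ℂ)))) z → z.im = 0 := by
  have hprod := (adG2_blockTriangular u).charpoly_eq_prod_of_injective (by decide)
  refine ⟨?_, fun z hz => ?_⟩
  · rw [hprod, adG2_eq, Fin.prod_univ_seven]
    simp only [Matrix.of_apply, Matrix.cons_val', Matrix.cons_val_zero, Matrix.cons_val_fin_one,
      Matrix.cons_val_one, Matrix.cons_val, map_zero, map_add, sub_zero]
    ring
  · obtain ⟨i, rfl⟩ := Matrix.exists_eq_of_hasEigenvalue_toLin'_map hprod Complex.ofRealHom hz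
    exact Complex.ofReal_im _

end
end

section
/- Let 𝔊₂ be the 7-dimensional real Lie algebra with basis (X₁,X₂,X₃,X₄,X₅,X,Y) and nonzero brackets [X₁,X₂]=X₄, [X₁,X₃]=X₅, [X,X₁]=X₁, [X,X₄]=X₄, [X,X₅]=X₅, [Y,X₃]=X₃, [Y,X₅]=X₅. Let F ∈ 𝔊₂* have coordinates (α₁,α₂,α₃,α₄,α₅,α,β) with α₃α₄ ≠ 0 and α₅ = 0. Then Ω_F(𝔊₂) = { (x₁*,x₂*,x₃*,x₄*,x₅*,x*,y*) ∈ 𝔊₂* : x₅* = 0, α₃x₃* > 0, α₄x₄* > 0 } (here x₁*, x₂*, x*, y* range over all of ℝ). -/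
/-!
For `α₅ = 0` the row vectors `α ᵥ* ad_U ^ (n + 1)` have a closed form: the covectors with vanishing
fifth coordinate form an `ad_U`-stable subspace, on which `ad_U` is triangular with a single
Jordan block (eigenvalue `u_X`, linking `X₁*` and `X₄*`). Summing the exponential series
expresses `F_U` through `exp`, `exprel x = (eˣ - 1) / x` and its derivative. In particular
`x₃* = α₃ e^{u_Y}`, `x₄* = α₄ e^{u_X}` and `x₅* = 0`, which gives `⊆`. Conversely `x₃*` and `x₄*`
determine `u_X` and `u_Y`, and the remaining coordinates are affine in the other components of `U`
with coefficients `±α₄ e^{u_X}`, `±α₄ exprel u_X`, `±α₃ exprel u_Y`, all nonzero, so they can be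
solved for one after another.
-/
noncomputable section

/-- `Ω_F(𝔊₂) = {F_U : U ∈ 𝔊₂}` where `⟨F_U,T⟩ = ⟨F, exp(ad_U)(T)⟩`; in coordinates
(dual basis), `F_U = α ᵥ* exp(ad_U)` where `α` is the coordinate vector of `F`. -/
def OmegaG2 (α : Fin 7 → ℝ) : Set (Fin 7 → ℝ) :=
  {g | ∃ u : Fin 7 → ℝ, g = Matrix.vecMul α (NormedSpace.exp (adG2 u))}


open Matrix Nat

theorem div_pos_of_mul_pos {K : Type*} [Field K] [LinearOrder K] [IsStrictOrderedRing K]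
    {a b : K} (ha : a ≠ 0) (h : 0 < a * b) : 0 < b / a := by
  rw [← mul_div_mul_left b a ha]
  exact div_pos h (mul_self_pos.2 ha)

theorem Matrix.hasSum_vecMul_exp {n : Type*} [Fintype n] [DecidableEq n]
    (v : n → ℝ) (A : Matrix n n ℝ) :
    HasSum (fun k => (k !⁻¹ : ℝ) • v ᵥ* A ^ k) (v ᵥ* NormedSpace.exp A) := by
  -- `NormedSpace.exp` depends only on the topology, so any algebra norm on matrices will do.
  let : NormedRing (Matrix n n ℝ) := Matrix.linftyOpNormedRing
  let : NormedAlgebra ℝ (Matrix n n ℝ) := Matrix.linftyOpNormedAlgebra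
  have h := (NormedSpace.exp_series_hasSum_exp' (𝕂 := ℝ) A).map
    (vecMulBilin ℝ ℝ v) (LinearMap.continuous_of_finiteDimensional _)
  simp only [Function.comp_def, vecMulBilin_apply, vecMul_smul] at h
  exact h

namespace Real

def exprel (x : ℝ) : ℝ := ∑' n : ℕ, x ^ n / (n + 1)!

def exprelDeriv (x : ℝ) : ℝ := ∑' n : ℕ, n * x ^ (n - 1) / (n + 1)!

theorem hasSum_pow_div_factorial (x : ℝ) : HasSum (fun n : ℕ => x ^ n / n !) (exp x) := by
  rw [exp_eq_exp_ℝ]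
  exact NormedSpace.expSeries_div_hasSum_exp x

theorem hasSum_pow_succ_div_factorial_succ (x : ℝ) :
    HasSum (fun n : ℕ => x ^ (n + 1) / (n + 1)!) (exp x - 1) := by
  simpa using (hasSum_nat_add_iff' 1).mpr (hasSum_pow_div_factorial x)

theorem summable_pow_div_factorial_succ (x : ℝ) : Summable fun n : ℕ => x ^ n / (n + 1)! := by
  refine .of_norm_bounded (summable_pow_div_factorial |x|) fun n => ?_
  rw [norm_div, norm_pow, norm_eq_abs, RCLike.norm_natCast]
  gcongr
  exact n.le_succ

theorem summable_mul_pow_pred_div_factorial_succ (x : ℝ) :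
    Summable fun n : ℕ => n * x ^ (n - 1) / (n + 1)! := by
  refine (summable_nat_add_iff 1).mp <|
    .of_norm_bounded (summable_pow_div_factorial |x|) fun m => ?_
  have h : ((m + 1 : ℕ) : ℝ) * x ^ (m + 1 - 1) / (m + 1 + 1)! = x ^ m / m ! / (m + 2 : ℕ) := by
    rw [factorial_succ, factorial_succ]
    push_cast
    field_simp
    ring
  rw [h, norm_div, norm_div, norm_pow, norm_eq_abs, RCLike.norm_natCast, RCLike.norm_natCast]
  exact div_le_self (by positivity) (Nat.one_le_cast.2 (by omega))

theorem mul_exprel (x : ℝ) : x * exprel x = exp x - 1 :=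
  ((summable_pow_div_factorial_succ x).hasSum.mul_left x).unique <|
    (hasSum_pow_succ_div_factorial_succ x).congr_fun fun n => by ring

theorem exprel_ne_zero (x : ℝ) : exprel x ≠ 0 := by
  rcases eq_or_ne x 0 with rfl | hx
  · rw [exprel, tsum_eq_single 0 fun n hn => by simp [hn]]
    simp
  · intro h
    have := mul_exprel x
    rw [h, mul_zero, eq_comm, sub_eq_zero, exp_eq_one_iff] at this
    exact hx this

theorem hasSum_jordan_series (x a b c d : ℝ) :
    HasSum (fun n : ℕ =>
        (a * x ^ (n + 1) + b * ((n + 1) * x ^ n) + c * x ^ n + d * (n * x ^ (n - 1))) / (n + 1)!)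
      (a * (exp x - 1) + b * exp x + c * exprel x + d * exprelDeriv x) := by
  have hexp : HasSum (fun n : ℕ => (n + 1) * x ^ n / (n + 1)!) (exp x) := by
    refine (hasSum_pow_div_factorial x).congr_fun fun n => ?_
    rw [factorial_succ, cast_mul, mul_comm _ (n ! : ℝ), ← div_div, cast_succ, mul_div_assoc,
      mul_div_cancel_left₀ _ (by positivity)]
  have h := (((hasSum_pow_succ_div_factorial_succ x).mul_left a).add (hexp.mul_left b)).add
    ((summable_pow_div_factorial_succ x).hasSum.mul_left c) |>.add
    ((summable_mul_pow_pred_div_factorial_succ x).hasSum.mul_left d)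
  simpa only [add_div, mul_div_assoc, exprel, exprelDeriv] using h

end Real

namespace G2

open Real

def adMatrix (u : Fin 7 → ℝ) : Matrix (Fin 7) (Fin 7) ℝ :=
  !![u 5, 0, 0, 0, 0, -u 0, 0;
     0, 0, 0, 0, 0, 0, 0;
     0, 0, u 6, 0, 0, 0, -u 2;
     -u 1, u 0, 0, u 5, 0, -u 3, 0;
     -u 2, 0, u 0, 0, u 5 + u 6, -u 4, -u 4;
     0, 0, 0, 0, 0, 0, 0;
     0, 0, 0, 0, 0, 0, 0]

theorem adG2_eq_adMatrix (u : Fin 7 → ℝ) : adG2 u = adMatrix u := by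
  ext k j
  fin_cases k <;> fin_cases j <;>
    simp [adG2, adMatrix, g2br, g2half, Fin.sum_univ_seven]

def adPowRow (α u : Fin 7 → ℝ) (n : ℕ) : Fin 7 → ℝ :=
  ![α 0 * u 5 ^ (n + 1) - α 3 * u 1 * ((n + 1) * u 5 ^ n),
    α 3 * u 0 * u 5 ^ n,
    α 2 * u 6 ^ (n + 1),
    α 3 * u 5 ^ (n + 1),
    0,
    -(α 0 * u 0 + α 3 * u 3) * u 5 ^ n + α 3 * u 0 * u 1 * (n * u 5 ^ (n - 1)),
    -(α 2 * u 2) * u 6 ^ n]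

theorem vecMul_adMatrix (α u : Fin 7 → ℝ) (h5 : α 4 = 0) :
    α ᵥ* adMatrix u = adPowRow α u 0 := by
  ext j
  fin_cases j <;> simp [vecMul, dotProduct, Fin.sum_univ_seven, adMatrix, adPowRow, h5] <;> ring

theorem adPowRow_vecMul_adMatrix (α u : Fin 7 → ℝ) (n : ℕ) :
    adPowRow α u n ᵥ* adMatrix u = adPowRow α u (n + 1) := by
  ext j
  fin_cases j <;> simp [vecMul, dotProduct, Fin.sum_univ_seven, adMatrix, adPowRow] <;> ring

theorem vecMul_adMatrix_pow_succ (α u : Fin 7 → ℝ) (h5 : α 4 = 0) (n : ℕ) :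
    α ᵥ* adMatrix u ^ (n + 1) = adPowRow α u n := by
  induction n with
  | zero => rw [pow_one, vecMul_adMatrix α u h5]
  | succ n ih => rw [pow_succ, ← vecMul_vecMul, ih, adPowRow_vecMul_adMatrix]

def orbitPoint (α u : Fin 7 → ℝ) : Fin 7 → ℝ :=
  ![(α 0 - α 3 * u 1) * exp (u 5),
    α 1 + α 3 * u 0 * exprel (u 5),
    α 2 * exp (u 6),
    α 3 * exp (u 5),
    0,
    α 5 - (α 0 * u 0 + α 3 * u 3) * exprel (u 5) + α 3 * u 0 * u 1 * exprelDeriv (u 5),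
    α 6 - α 2 * u 2 * exprel (u 6)]

theorem vecMul_exp_adG2 (α u : Fin 7 → ℝ) (h5 : α 4 = 0) :
    α ᵥ* NormedSpace.exp (adG2 u) = orbitPoint α u := by
  rw [adG2_eq_adMatrix]
  have hseries : HasSum (fun n : ℕ => ((n + 1)! : ℝ)⁻¹ • adPowRow α u n)
      (α ᵥ* NormedSpace.exp (adMatrix u) - α) := by
    simpa [vecMul_adMatrix_pow_succ α u h5] using
      (hasSum_nat_add_iff' 1).mpr (hasSum_vecMul_exp α (adMatrix u))
  have hcoords : HasSum (fun n : ℕ => ((n + 1)! : ℝ)⁻¹ • adPowRow α u n)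
      (orbitPoint α u - α) := by
    refine Pi.hasSum.2 fun j => ?_
    fin_cases j <;> [
      convert hasSum_jordan_series (u 5) (α 0) (-(α 3 * u 1)) 0 0 using 1;
      convert hasSum_jordan_series (u 5) 0 0 (α 3 * u 0) 0 using 1;
      convert hasSum_jordan_series (u 6) (α 2) 0 0 0 using 1;
      convert hasSum_jordan_series (u 5) (α 3) 0 0 0 using 1;
      convert hasSum_jordan_series 0 0 0 0 0 using 1;
      convert hasSum_jordan_series (u 5) 0 0 (-(α 0 * u 0 + α 3 * u 3)) (α 3 * u 0 * u 1) using 1;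
      convert hasSum_jordan_series (u 6) 0 0 (-(α 2 * u 2)) 0 using 1] <;>
    (try ext n) <;> simp [adPowRow, orbitPoint, h5] <;> ring
  exact sub_left_inj.1 (hseries.unique hcoords)

theorem exists_orbitPoint_eq {α g : Fin 7 → ℝ} (hα2 : α 2 ≠ 0) (hα3 : α 3 ≠ 0)
    (hg4 : g 4 = 0) (hg2 : 0 < α 2 * g 2) (hg3 : 0 < α 3 * g 3) : ∃ u, orbitPoint α u = g := by
  set s := log (g 3 / α 3)
  set t := log (g 2 / α 2)
  have hes : exp s = g 3 / α 3 := exp_log (div_pos_of_mul_pos hα3 hg3)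
  have het : exp t = g 2 / α 2 := exp_log (div_pos_of_mul_pos hα2 hg2)
  have hg3' : g 3 ≠ 0 := right_ne_zero_of_mul hg3.ne'
  have hφs := exprel_ne_zero s
  have hφt := exprel_ne_zero t
  set a := (g 1 - α 1) / (α 3 * exprel s)
  set b := (α 0 - g 0 / exp s) / α 3
  set c := (α 6 - g 6) / (α 2 * exprel t)
  set d := (α 5 - g 5 - α 0 * a * exprel s + α 3 * a * b * exprelDeriv s) / (α 3 * exprel s)
  refine ⟨![a, b, c, d, 0, s, t], ?_⟩
  ext j
  fin_cases j <;> simp [orbitPoint, hes, het, hg4, a, b, c, d] <;> field_simp <;> ring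

end G2

/-- If `F ∈ 𝔊₂*` has coordinates `(α₁,…,α₅,α,β)` with `α₃α₄ ≠ 0` and `α₅ = 0`, then
`Ω_F(𝔊₂) = {(x₁*,…,x₅*,x*,y*) : x₅* = 0, α₃x₃* > 0, α₄x₄* > 0}`. -/
theorem omega_G2_hyperplane (α : Fin 7 → ℝ) (h34 : α 2 * α 3 ≠ 0) (h5 : α 4 = 0) :
    OmegaG2 α = {g : Fin 7 → ℝ | g 4 = 0 ∧ α 2 * g 2 > 0 ∧ α 3 * g 3 > 0} := by
  obtain ⟨hα2, hα3⟩ := mul_ne_zero_iff.mp h34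
  ext g
  simp only [OmegaG2, G2.vecMul_exp_adG2 α _ h5]
  constructor
  · rintro ⟨u, rfl⟩
    have hpos {a : ℝ} (ha : a ≠ 0) (x : ℝ) : 0 < a * (a * Real.exp x) := by
      rw [← mul_assoc]
      exact mul_pos (mul_self_pos.2 ha) (Real.exp_pos x)
    exact ⟨rfl, hpos hα2 (u 6), hpos hα3 (u 5)⟩
  · rintro ⟨hg4, hg2, hg3⟩
    obtain ⟨u, hu⟩ := G2.exists_orbitPoint_eq hα2 hα3 hg4 hg2 hg3
    exact ⟨u, hu.symm⟩

end
end

section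
/- Let 𝔊₂ be the 7-dimensional real Lie algebra with basis (X₁,X₂,X₃,X₄,X₅,X,Y) and nonzero brackets [X₁,X₂]=X₄, [X₁,X₃]=X₅, [X,X₁]=X₁, [X,X₄]=X₄, [X,X₅]=X₅, [Y,X₃]=X₃, [Y,X₅]=X₅. Let F ∈ 𝔊₂* have coordinates (α₁,α₂,α₃,α₄,α₅,α,β) with α₄α₅ ≠ 0. Then Ω_F(𝔊₂) = { (x₁*,x₂*,x₃*,x₄*,x₅*,x*,y*) ∈ 𝔊₂* : x₂* − x₃*x₄*/x₅* = (α₂α₅ − α₃α₄)/α₅, α₄x₄* > 0, α₅x₅* > 0 } (here x₁*, x₃*, x*, y* range over all of ℝ). -/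
noncomputable section


noncomputable section

/-! The curve `t ↦ F_{tU} = F ∘ exp(t ad_U)` solves the linear ODE `φ' = φ ∘ ad_U`. Along it
`x₄*` and `x₅*` are pure exponentials, and the semi-invariant `x₂*x₅* − x₃*x₄*` acquires the
same factor as `x₅*`; this gives the quadric equation and the two sign conditions. Conversely,
when `U` has no `X₃`-component the ODE is triangular and is solved coordinate by coordinate
with Duhamel's formula: `x₄*, x₅*` fix the coefficients of `X, Y`, and each of `x₁*, x₃*, x*, y*`
is affine, with nonzero slope, in one further coefficient of `U`, while `x₂*` is then forced by
the quadric. -/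

open Matrix Real

theorem hasDerivAt_vecMul_exp_smul {n : Type*} [Fintype n] [DecidableEq n] (v : n → ℝ)
    (A : Matrix n n ℝ) (t : ℝ) :
    HasDerivAt (fun s : ℝ => v ᵥ* NormedSpace.exp (s • A))
      ((v ᵥ* NormedSpace.exp (t • A)) ᵥ* A) t := by
  -- `exp` depends only on the topology, so any submultiplicative matrix norm will do.
  let : NormedRing (Matrix n n ℝ) := Matrix.linftyOpNormedRing
  let : NormedAlgebra ℝ (Matrix n n ℝ) := Matrix.linftyOpNormedAlgebra
  rw [vecMul_vecMul]
  exact (vecMulBilin ℝ ℝ v).toContinuousLinearMap.hasFDerivAt.comp_hasDerivAt t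
    (hasDerivAt_exp_smul_const A t)

theorem eq_exp_mul_mul_add_integral {h r : ℝ → ℝ} {c : ℝ}
    (hh : ∀ t, HasDerivAt h (c * h t + r t) t) (hr : Continuous r) (t : ℝ) :
    h t = exp (c * t) * (h 0 + ∫ s in 0..t, exp (-(c * s)) * r s) := by
  have hk : ∀ s, HasDerivAt (fun s => exp (-(c * s)) * h s) (exp (-(c * s)) * r s) s :=
    fun s => by
      have he : HasDerivAt (fun s => exp (-(c * s))) (exp (-(c * s)) * -c) s := by
        simpa using ((hasDerivAt_id' s).const_mul (-c)).exp
      exact (he.fun_mul (hh s)).congr_deriv (by ring)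
  rw [intervalIntegral.integral_eq_sub_of_hasDerivAt (fun s _ => hk s)
    ((by fun_prop : Continuous fun s => exp (-(c * s)) * r s).intervalIntegrable _ _)]
  simp only [mul_zero, neg_zero, exp_zero, one_mul, add_sub_cancel, ← mul_assoc, ← exp_add,
    add_neg_cancel]

theorem eq_exp_mul_mul_of_hasDerivAt {h : ℝ → ℝ} {c : ℝ}
    (hh : ∀ t, HasDerivAt h (c * h t) t) (t : ℝ) : h t = exp (c * t) * h 0 := by
  simpa using eq_exp_mul_mul_add_integral (r := 0) (by simpa using hh) continuous_const t

theorem integral_exp_mul_pos (c : ℝ) : 0 < ∫ s in (0 : ℝ)..1, exp (c * s) :=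
  intervalIntegral.intervalIntegral_pos_of_pos
    ((by fun_prop : Continuous fun s => exp (c * s)).intervalIntegrable _ _)
    (fun _ => exp_pos _) one_pos

theorem exists_exp_mul_eq {p q : ℝ} (h : 0 < p * q) : ∃ a, exp a * p = q := by
  have hp : p ≠ 0 := by rintro rfl; simp at h
  refine ⟨log (q / p), ?_⟩
  rw [exp_log (by simpa [mul_div_mul_left _ _ hp] using div_pos h (mul_self_pos.2 hp))]
  field_simp

theorem vecMul_adG2 (v u : Fin 7 → ℝ) :
    v ᵥ* adG2 u = ![u 5 * v 0 - u 1 * v 3 - u 2 * v 4, u 0 * v 3, u 6 * v 2 + u 0 * v 4,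
      u 5 * v 3, (u 5 + u 6) * v 4, -(u 0 * v 0 + u 3 * v 3 + u 4 * v 4),
      -(u 2 * v 2 + u 4 * v 4)] := by
  ext j
  fin_cases j <;>
    simp [vecMul, dotProduct, adG2, g2br, g2half, Fin.sum_univ_seven, Pi.single_apply] <;> ring

def orbitPathG2 (α u : Fin 7 → ℝ) (t : ℝ) : Fin 7 → ℝ := α ᵥ* NormedSpace.exp (t • adG2 u)

def semiInvariantG2 (g : Fin 7 → ℝ) : ℝ := g 1 * g 4 - g 2 * g 3

def quadricG2 (α : Fin 7 → ℝ) : Set (Fin 7 → ℝ) :=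
  {g | g 1 - g 2 * g 3 / g 4 = (α 1 * α 4 - α 2 * α 3) / α 4 ∧ α 3 * g 3 > 0 ∧ α 4 * g 4 > 0}

namespace orbitPathG2

variable (α u : Fin 7 → ℝ)

local notation "f" => orbitPathG2 α u

theorem zero : f 0 = α := by
  simp [orbitPathG2]

theorem one : f 1 = α ᵥ* NormedSpace.exp (adG2 u) := by
  simp [orbitPathG2]

theorem hasDerivAt_apply (t : ℝ) (j : Fin 7) :
    HasDerivAt (fun s => f s j) ((f t ᵥ* adG2 u) j) t :=
  hasDerivAt_pi.1 (hasDerivAt_vecMul_exp_smul α (adG2 u) t) j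

theorem apply_three (t : ℝ) : f t 3 = exp (u 5 * t) * α 3 := by
  refine (eq_exp_mul_mul_of_hasDerivAt (h := fun s => f s 3) (fun t => ?_) t).trans (by rw [zero])
  simpa [vecMul_adG2] using hasDerivAt_apply α u t 3

theorem apply_four (t : ℝ) : f t 4 = exp ((u 5 + u 6) * t) * α 4 := by
  refine (eq_exp_mul_mul_of_hasDerivAt (h := fun s => f s 4) (fun t => ?_) t).trans (by rw [zero])
  simpa [vecMul_adG2] using hasDerivAt_apply α u t 4

theorem semiInvariantG2_apply (t : ℝ) :
    semiInvariantG2 (f t) = exp ((u 5 + u 6) * t) * semiInvariantG2 α := by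
  refine (eq_exp_mul_mul_of_hasDerivAt (h := fun t => semiInvariantG2 (f t))
    (fun t => ?_) t).trans (by rw [zero])
  refine (((hasDerivAt_apply α u t 1).fun_mul (hasDerivAt_apply α u t 4)).fun_sub
    ((hasDerivAt_apply α u t 2).fun_mul (hasDerivAt_apply α u t 3))).congr_deriv ?_
  simp only [vecMul_adG2, semiInvariantG2, cons_val]
  ring

theorem mem_quadricG2 (h3 : α 3 ≠ 0) (h4 : α 4 ≠ 0) (t : ℝ) :
    f t ∈ quadricG2 α := by
  refine ⟨?_, ?_, ?_⟩
  · have := semiInvariantG2_apply α u t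
    rw [semiInvariantG2, semiInvariantG2] at this
    rw [sub_div' (by simp [apply_four, h4]), this, apply_four,
      mul_div_mul_left _ _ (exp_ne_zero _)]
  · rw [apply_three, mul_left_comm]
    exact mul_pos (exp_pos _) (mul_self_pos.2 h3)
  · rw [apply_four, mul_left_comm]
    exact mul_pos (exp_pos _) (mul_self_pos.2 h4)

theorem one_apply_two :
    f 1 2 = exp (u 6) * (α 2 + u 0 * α 4 * ∫ s in (0 : ℝ)..1, exp (u 5 * s)) := by
  refine (eq_exp_mul_mul_add_integral (h := fun s => f s 2) (c := u 6)
    (r := fun s => u 0 * (exp ((u 5 + u 6) * s) * α 4)) (fun t => ?_) (by fun_prop) 1).trans ?_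
  · refine (hasDerivAt_apply α u t 2).congr_deriv ?_
    simp [vecMul_adG2, apply_four]
  · rw [zero, mul_one, intervalIntegral.integral_congr
      (g := fun s => u 0 * α 4 * exp (u 5 * s))
      fun s _ => by simp only [add_mul, exp_add, exp_neg]; field_simp,
      intervalIntegral.integral_const_mul]

variable {u}

theorem apply_zero_of_coord_two_eq_zero (hu : u 2 = 0) (t : ℝ) :
    f t 0 = exp (u 5 * t) * (α 0 - u 1 * α 3 * t) := by
  refine (eq_exp_mul_mul_add_integral (h := fun s => f s 0) (c := u 5)
    (r := fun s => -(u 1 * (exp (u 5 * s) * α 3))) (fun t => ?_) (by fun_prop) t).trans ?_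
  · refine (hasDerivAt_apply α u t 0).congr_deriv ?_
    simp only [vecMul_adG2, cons_val, apply_three, hu]
    ring
  · rw [zero, intervalIntegral.integral_congr (g := fun _ => -(u 1 * α 3))
      fun s _ => by simp only [exp_neg]; field_simp, intervalIntegral.integral_const, smul_eq_mul]
    ring

theorem one_apply_six_of_coord_two_eq_zero (hu : u 2 = 0) :
    f 1 6 = α 6 - u 4 * α 4 * ∫ s in (0 : ℝ)..1, exp ((u 5 + u 6) * s) := by
  refine (eq_exp_mul_mul_add_integral (h := fun s => f s 6) (c := 0)
    (r := fun s => -(u 4 * (exp ((u 5 + u 6) * s) * α 4))) (fun t => ?_) (by fun_prop) 1).trans ?_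
  · refine (hasDerivAt_apply α u t 6).congr_deriv ?_
    simp [vecMul_adG2, apply_four, hu]
  · rw [zero, intervalIntegral.integral_congr
      (g := fun s => -(u 4 * α 4) * exp ((u 5 + u 6) * s))
      fun s _ => by simp only [zero_mul, neg_zero, exp_zero, one_mul]; ring,
      intervalIntegral.integral_const_mul, zero_mul, exp_zero, one_mul]
    ring

theorem one_apply_five_of_coord_two_eq_zero (hu : u 2 = 0) :
    f 1 5 = α 5 - (∫ s in (0 : ℝ)..1,
      (u 0 * (exp (u 5 * s) * (α 0 - u 1 * α 3 * s)) + u 4 * (exp ((u 5 + u 6) * s) * α 4)))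
      - u 3 * α 3 * ∫ s in (0 : ℝ)..1, exp (u 5 * s) := by
  refine (eq_exp_mul_mul_add_integral (h := fun s => f s 5) (c := 0)
    (r := fun s => -((u 0 * (exp (u 5 * s) * (α 0 - u 1 * α 3 * s))
      + u 4 * (exp ((u 5 + u 6) * s) * α 4)) + u 3 * α 3 * exp (u 5 * s)))
    (fun t => ?_) (by fun_prop) 1).trans ?_
  · refine (hasDerivAt_apply α u t 5).congr_deriv ?_
    simp only [vecMul_adG2, cons_val, apply_zero_of_coord_two_eq_zero α hu, apply_three,
      apply_four]
    ring
  · rw [zero, intervalIntegral.integral_congr (g := fun s => -(u 0 * (exp (u 5 * s) *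
      (α 0 - u 1 * α 3 * s)) + u 4 * (exp ((u 5 + u 6) * s) * α 4)) +
      -(u 3 * α 3) * exp (u 5 * s))
      fun s _ => by simp only [zero_mul, neg_zero, exp_zero, one_mul]; ring,
      intervalIntegral.integral_add
        ((by fun_prop : Continuous _).intervalIntegrable _ _)
        ((by fun_prop : Continuous _).intervalIntegrable _ _),
      intervalIntegral.integral_neg, intervalIntegral.integral_const_mul, zero_mul, exp_zero,
      one_mul]
    ring

end orbitPathG2

theorem OmegaG2_subset_quadricG2 {α : Fin 7 → ℝ} (h3 : α 3 ≠ 0) (h4 : α 4 ≠ 0) :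
    OmegaG2 α ⊆ quadricG2 α := by
  rintro _ ⟨u, rfl⟩
  rw [← orbitPathG2.one]
  exact orbitPathG2.mem_quadricG2 α u h3 h4 1

theorem exists_orbitPathG2_one_eq_of_coords {α : Fin 7 → ℝ} (h3 : α 3 ≠ 0) (h4 : α 4 ≠ 0)
    (g : Fin 7 → ℝ) (a b : ℝ) :
    ∃ u : Fin 7 → ℝ, u 5 = a ∧ u 6 = b ∧ orbitPathG2 α u 1 0 = g 0 ∧
      orbitPathG2 α u 1 2 = g 2 ∧ orbitPathG2 α u 1 5 = g 5 ∧ orbitPathG2 α u 1 6 = g 6 := by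
  have hIa := (integral_exp_mul_pos a).ne'
  have hIab := (integral_exp_mul_pos (a + b)).ne'
  set u1 := (α 0 - g 0 * exp (-a)) / α 3
  set u0 := (g 2 * exp (-b) - α 2) / (α 4 * ∫ s in (0 : ℝ)..1, exp (a * s))
  set u4 := (α 6 - g 6) / (α 4 * ∫ s in (0 : ℝ)..1, exp ((a + b) * s))
  set u3 := (α 5 - g 5 - ∫ s in (0 : ℝ)..1, (u0 * (exp (a * s) * (α 0 - u1 * α 3 * s))
    + u4 * (exp ((a + b) * s) * α 4))) / (α 3 * ∫ s in (0 : ℝ)..1, exp (a * s))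
  set u : Fin 7 → ℝ := ![u0, u1, 0, u3, u4, a, b]
  have hu : u 2 = 0 := rfl
  refine ⟨u, rfl, rfl, ?_, ?_, ?_, ?_⟩
  · rw [orbitPathG2.apply_zero_of_coord_two_eq_zero α hu]
    simp only [u, u1, cons_val, exp_neg]
    field_simp
    ring
  · rw [orbitPathG2.one_apply_two]
    simp only [u, u0, cons_val, exp_neg]
    field_simp
    ring
  · rw [orbitPathG2.one_apply_five_of_coord_two_eq_zero α hu]
    simp only [u, cons_val]
    rw [mul_assoc u3, div_mul_cancel₀ _ (mul_ne_zero h3 hIa)]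
    ring
  · rw [orbitPathG2.one_apply_six_of_coord_two_eq_zero α hu]
    simp only [u, u4, cons_val]
    field_simp
    ring

theorem quadricG2_subset_OmegaG2 {α : Fin 7 → ℝ} (h3 : α 3 ≠ 0) (h4 : α 4 ≠ 0) :
    quadricG2 α ⊆ OmegaG2 α := by
  rintro g ⟨hq, hg3, hg4⟩
  obtain ⟨a, ha⟩ := exists_exp_mul_eq hg3
  obtain ⟨c, hc⟩ := exists_exp_mul_eq hg4
  obtain ⟨u, rfl, hb, e0, e2, e5, e6⟩ := exists_orbitPathG2_one_eq_of_coords h3 h4 g a (c - a)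
  refine ⟨u, ?_⟩
  rw [← orbitPathG2.one]
  have e3 : orbitPathG2 α u 1 3 = g 3 := by
    simpa [orbitPathG2.apply_three] using ha
  have e4 : orbitPathG2 α u 1 4 = g 4 := by
    simpa [orbitPathG2.apply_four, hb] using hc
  have e1 : orbitPathG2 α u 1 1 = g 1 := by
    have := (orbitPathG2.mem_quadricG2 α u h3 h4 1).1
    rw [e2, e3, e4] at this
    linarith
  ext j
  fin_cases j
  exacts [e0.symm, e1.symm, e2.symm, e3.symm, e4.symm, e5.symm, e6.symm]

/-- If `F ∈ 𝔊₂*` has coordinates `(α₁,…,α₅,α,β)` with `α₄α₅ ≠ 0`, then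
`Ω_F(𝔊₂) = {(x₁*,…,x₅*,x*,y*) : x₂* − x₃*x₄*/x₅* = (α₂α₅−α₃α₄)/α₅,
α₄x₄* > 0, α₅x₅* > 0}`. -/
theorem omega_G2_quadric (α : Fin 7 → ℝ) (h45 : α 3 * α 4 ≠ 0) :
    OmegaG2 α = {g : Fin 7 → ℝ |
      g 1 - g 2 * g 3 / g 4 = (α 1 * α 4 - α 2 * α 3) / α 4 ∧
      α 3 * g 3 > 0 ∧ α 4 * g 4 > 0} := by
  have h3 : α 3 ≠ 0 := left_ne_zero_of_mul h45
  have h4 : α 4 ≠ 0 := right_ne_zero_of_mul h45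
  exact (OmegaG2_subset_quadricG2 h3 h4).antisymm (quadricG2_subset_OmegaG2 h3 h4)
end
end
end
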